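/- Let T be a thick locally finite tree and let G ≤ Aut(T) be type-distance-transitive. Let x, y be vertices with d(x, y) = k ≥ 1 and let z be a neighbour of y with d(x, z) = k + 1 (so that S_z(x,1) = S_y(x,1)). Let Λ be the image of G(x, y) acting on S_y(x,1), let Λ' be the image of G(x, z) acting on S_y(x,1), and let K be the kernel of the action of G(x, y) on S_y(x,1). Then Λ' ≤ Λ, the index |Λ : Λ'| equals the number of orbits of K on S_x(y,1), and this index divides deg(y) − 1, where deg(y) is the number of neighbours of y. -/

import Mathlib

/-- The pointwise stabilizer of a set of vertices, inside the full symmetric group. -/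
def ptStab {V : Type*} (s : Set V) : Subgroup (Equiv.Perm V) where
  carrier := {g | ∀ v ∈ s, g v = v}
  one_mem' := by intro v _; rfl
  mul_mem' := by
    intro a b ha hb v hv
    simp only [Set.mem_setOf_eq] at *
    rw [Equiv.Perm.mul_apply, hb v hv, ha v hv]
  inv_mem' := by
    intro a ha v hv
    simp only [Set.mem_setOf_eq] at *
    calc a⁻¹ v = a⁻¹ (a v) := by rw [ha v hv]
      _ = v := a.symm_apply_apply v

/-- `G` consists of automorphisms of the graph `T`. -/
def PreservesAdj {V : Type*} (T : SimpleGraph V) (G : Subgroup (Equiv.Perm V)) : Prop :=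
  ∀ g ∈ G, ∀ a b : V, T.Adj a b ↔ T.Adj (g a) (g b)

/-- `G` is `k`-type-distance-transitive. -/
def TypeDistTrans {V : Type*} (T : SimpleGraph V) (G : Subgroup (Equiv.Perm V)) (k : ℕ) : Prop :=
  ∀ x y x' y' : V, T.dist x y = k → T.dist x' y' = k → Even (T.dist x x') →
    ∃ g ∈ G, g x = x' ∧ g y = y'

/-- The tree is thick: every vertex has at least three neighbours. -/
def Thick {V : Type*} (T : SimpleGraph V) : Prop :=
  ∀ v : V, ∃ a b c : V, T.Adj v a ∧ T.Adj v b ∧ T.Adj v c ∧ a ≠ b ∧ a ≠ c ∧ b ≠ c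

/-! `G(x,y)` maps onto `Λ` with kernel `K` and `G(x,z)` onto `Λ'`, so
`|Λ : Λ'| = |G(x,y) : G(x,z)K|`. Type-distance-transitivity makes `G(x,y)` transitive on
`S_x(y,1)`: an element of `G` fixing `x` and moving `z` to `w ∈ S_x(y,1)` must fix `y`, the
unique neighbour of `w` closer to `x`. So `G(x,z)` is a point stabilizer of a transitive action,
and as `K` is normal, the stabilizer of the `K`-orbit of `z` is `G(x,z)K`. Hence
`|G(x,y) : G(x,z)K|` counts the `K`-orbits and divides
`|G(x,y) : G(x,z)| = |S_x(y,1)| = deg(y) - 1`. -/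

namespace SimpleGraph

variable {V W : Type*} {T : SimpleGraph V} {T' : SimpleGraph W}

theorem Hom.edist_le (f : T →g T') (u v : V) : T'.edist (f u) (f v) ≤ T.edist u v := by
  rcases eq_or_ne (T.edist u v) ⊤ with h | h
  · simp [h]
  · obtain ⟨p, hp⟩ := (reachable_of_edist_ne_top h).exists_walk_length_eq_edist
    rw [← hp]
    simpa using SimpleGraph.edist_le (p.map f)

theorem Iso.edist_eq (f : T ≃g T') (u v : V) : T'.edist (f u) (f v) = T.edist u v :=
  le_antisymm (f.toHom.edist_le u v) (by simpa using f.symm.toHom.edist_le (f u) (f v))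

theorem Iso.dist_eq (f : T ≃g T') (u v : V) : T'.dist (f u) (f v) = T.dist u v := by
  simp only [SimpleGraph.dist, f.edist_eq]

theorem Reachable.exists_adj_dist_add_one_eq {x v : V} (h : T.Reachable x v) (hne : x ≠ v) :
    ∃ u, T.Adj u v ∧ T.dist x u + 1 = T.dist x v := by
  obtain ⟨p, hp⟩ := h.exists_walk_length_eq_dist
  have hnil : ¬p.Nil := Walk.not_nil_of_ne hne
  have hadj := p.adj_penultimate hnil
  refine ⟨p.penultimate, hadj, le_antisymm ?_ ?_⟩
  · have := dist_le p.dropLast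
    have := Walk.length_dropLast_add_one hnil
    omega
  · simpa [dist_eq_one_iff_adj.mpr hadj] using hadj.reachable.dist_triangle_right x

theorem IsAcyclic.eq_of_adj_of_dist_add_one_eq (hT : T.IsAcyclic) {x v w w' : V}
    (hw : T.Adj w v) (hw' : T.Adj w' v)
    (h : T.dist x w + 1 = T.dist x v) (h' : T.dist x w' + 1 = T.dist x v) : w = w' := by
  have hxv : T.Reachable x v := Reachable.of_dist_ne_zero (by omega)
  obtain ⟨p, hp⟩ := (hxv.trans hw.symm.reachable).exists_walk_length_eq_dist
  obtain ⟨q, hq⟩ := (hxv.trans hw'.symm.reachable).exists_walk_length_eq_dist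
  have hpv : (p.concat hw).IsPath := (p.concat hw).isPath_of_length_eq_dist (by simp [hp, h])
  have hqv : (q.concat hw').IsPath := (q.concat hw').isPath_of_length_eq_dist (by simp [hq, h'])
  simpa using congrArg (fun r : T.Path x v => (r : T.Walk x v).penultimate)
    ((hT.subsingleton_path x v).elim ⟨_, hpv⟩ ⟨_, hqv⟩)

/-- The paper's `S_x(y, 1)`. -/
def awayNeighborSet (T : SimpleGraph V) (x y : V) : Set V :=
  {w | T.Adj y w ∧ T.dist w x = T.dist y x + 1}

theorem IsTree.awayNeighborSet_eq_diff_singleton (hT : T.IsTree) {x y u : V} (hu : T.Adj u y)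
    (hxu : T.dist x u + 1 = T.dist x y) : T.awayNeighborSet x y = T.neighborSet y \ {u} := by
  ext w
  simp only [awayNeighborSet, Set.mem_ofPred_eq, Set.mem_sdiff, mem_neighborSet,
    Set.mem_singleton_iff, dist_comm (v := x)]
  refine ⟨fun ⟨hyw, hxw⟩ => ⟨hyw, by rintro rfl; omega⟩,
    fun ⟨hyw, hwu⟩ => ⟨hyw, ?_⟩⟩
  rcases hT.dist_eq_dist_add_one_of_adj x hyw with hcloser | hfarther
  · exact absurd (hT.isAcyclic.eq_of_adj_of_dist_add_one_eq hyw.symm hu hcloser.symm hxu) hwu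
  · exact hfarther

theorem IsTree.ncard_awayNeighborSet (hT : T.IsTree) {x y : V} (hxy : x ≠ y) :
    (T.awayNeighborSet x y).ncard = (T.neighborSet y).ncard - 1 := by
  obtain ⟨u, hu, hxu⟩ := (hT.connected x y).exists_adj_dist_add_one_eq hxy
  rw [hT.awayNeighborSet_eq_diff_singleton hu hxu,
    Set.ncard_sdiff_singleton_of_mem (s := T.neighborSet y) hu.symm]

end SimpleGraph

namespace MulAction

open Pointwise

variable {G X : Type*} [Group G] [MulAction G X]

theorem stabilizer_orbit_of_normal (N : Subgroup G) [N.Normal] (a : X) :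
    stabilizer G (orbit N a) = stabilizer G a ⊔ N := by
  refine le_antisymm (fun g hg => ?_) (sup_le ?_ fun n hn => smul_orbit (⟨n, hn⟩ : N) a)
  · obtain ⟨n, hn⟩ := mem_orbit_iff.mp <| show g • a ∈ orbit N a by
      rw [← mem_stabilizer_iff.mp hg]
      exact Set.smul_mem_smul_set (mem_orbit_self a)
    have hstab : (n : G)⁻¹ * g ∈ stabilizer G a := by
      rw [mem_stabilizer_iff, mul_smul, ← hn]
      simp [Subgroup.smul_def]
    simpa using mul_mem (Subgroup.mem_sup_right n.2) (Subgroup.mem_sup_left hstab)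
  · exact (IsBlock.orbit_of_normal a).stabilizer_le (mem_orbit_self a)

theorem image_orbit_of_normal (N : Subgroup G) [N.Normal] (a : X) :
    (orbit N ·) '' orbit G a = orbit G (orbit N a) := by
  ext B
  simp only [Set.mem_image, mem_orbit_iff, exists_exists_eq_and, smul_orbit_eq_orbit_smul]

theorem index_stabilizer_sup_normal (N : Subgroup G) [N.Normal] (a : X) :
    (stabilizer G a ⊔ N).index = ((orbit N ·) '' orbit G a).ncard := by
  rw [← stabilizer_orbit_of_normal, index_stabilizer, image_orbit_of_normal]

end MulAction

section Automorphisms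

variable {V : Type*} {T : SimpleGraph V} {G : Subgroup (Equiv.Perm V)}

theorem mem_ptStab_singleton {g : Equiv.Perm V} {v : V} : g ∈ ptStab {v} ↔ g v = v := by
  simp [ptStab]

theorem comap_subtype_ptStab_singleton (H : Subgroup (Equiv.Perm V)) (v : V) :
    (ptStab {v}).comap H.subtype = MulAction.stabilizer H v := by
  ext g
  rw [Subgroup.mem_comap, mem_ptStab_singleton, MulAction.mem_stabilizer_iff]
  rfl

theorem orbit_subgroup_eq_setOf_apply {H : Subgroup (Equiv.Perm V)} (N : Subgroup H) (w : V) :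
    MulAction.orbit N w = {w' | ∃ g ∈ N, (g : Equiv.Perm V) w = w'} := by
  ext w'
  simp [MulAction.mem_orbit_iff, Subgroup.smul_def]

theorem PreservesAdj.dist_apply (hG : PreservesAdj T G) {g : Equiv.Perm V} (hg : g ∈ G)
    (a b : V) : T.dist (g a) (g b) = T.dist a b :=
  SimpleGraph.Iso.dist_eq ⟨g, (hG g hg _ _).symm⟩ a b

theorem TypeDistTrans.orbit_eq_awayNeighborSet {x y z : V}
    (hTDT : TypeDistTrans T G (T.dist y x + 1)) (hT : T.IsAcyclic) (hG : PreservesAdj T G)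
    (hz : z ∈ T.awayNeighborSet x y) :
    MulAction.orbit ↥(G ⊓ ptStab {x} ⊓ ptStab {y}) z = T.awayNeighborSet x y := by
  have hmem : ∀ g, g ∈ G ⊓ ptStab {x} ⊓ ptStab {y} ↔ g ∈ G ∧ g x = x ∧ g y = y := by
    simp [mem_ptStab_singleton, and_assoc]
  ext w
  constructor
  · rintro ⟨g, rfl⟩
    obtain ⟨hgG, hgx, hgy⟩ := (hmem g).1 g.2
    refine ⟨?_, ?_⟩
    · simpa [Subgroup.smul_def, hgy] using (hG g hgG y z).mp hz.1
    · simpa [Subgroup.smul_def, hgx] using (hG.dist_apply hgG z x).trans hz.2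
  · intro hw
    obtain ⟨g, hgG, hgx, hgw⟩ :=
      hTDT x z x w (T.dist_comm.trans hz.2) (T.dist_comm.trans hw.2) (by simp)
    have hxw : T.dist x y + 1 = T.dist x w := by
      rw [T.dist_comm (u := x) (v := y), T.dist_comm (u := x) (v := w), hw.2]
    have hgy : g y = y := by
      refine hT.eq_of_adj_of_dist_add_one_eq (x := x) ?_ hw.1 ?_ hxw
      · simpa [hgw] using (hG g hgG y z).mp hz.1
      · rw [← hxw, ← hG.dist_apply hgG x y, hgx]
    exact ⟨⟨g, (hmem g).2 ⟨hgG, hgx, hgy⟩⟩, hgw⟩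

end Automorphisms

theorem index_of_extended_segment_stabilizer_general
    {V : Type*} (T : SimpleGraph V) (hconn : T.Connected) (hacyc : T.IsAcyclic)
    (G : Subgroup (Equiv.Perm V)) (hG : PreservesAdj T G)
    (hTDT : ∀ k, TypeDistTrans T G k)
    (x y z : V) (k : ℕ) (hk : 1 ≤ k) (hd : T.dist x y = k)
    (hyz : T.Adj y z) (hxz : T.dist x z = k + 1)
    (ρ : ↥(G ⊓ ptStab {x} ⊓ ptStab {y}) →*
        Equiv.Perm {w : V // T.Adj x w ∧ T.dist w y = T.dist x y + 1}) :
    Subgroup.map ρ ((ptStab {z}).comap (G ⊓ ptStab {x} ⊓ ptStab {y}).subtype) ≤ ρ.range ∧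
    (Subgroup.map ρ ((ptStab {z}).comap (G ⊓ ptStab {x} ⊓ ptStab {y}).subtype)).relIndex
        ρ.range =
      {S : Set V | ∃ w : V, (T.Adj y w ∧ T.dist w x = T.dist y x + 1) ∧
        S = {w' : V | ∃ g ∈ MonoidHom.ker ρ, (g : Equiv.Perm V) w = w'}}.ncard ∧
    (Subgroup.map ρ ((ptStab {z}).comap (G ⊓ ptStab {x} ⊓ ptStab {y}).subtype)).relIndex
        ρ.range ∣ ((T.neighborSet y).ncard - 1) := by
  have hxy : x ≠ y := by
    rintro rfl
    rw [SimpleGraph.dist_self] at hd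
    omega
  have hz : z ∈ T.awayNeighborSet x y := ⟨hyz, by rw [T.dist_comm, hxz, T.dist_comm, hd]⟩
  have horbit := (hTDT _).orbit_eq_awayNeighborSet hacyc hG hz
  have hindex :
      (Subgroup.map ρ ((ptStab {z}).comap (G ⊓ ptStab {x} ⊓ ptStab {y}).subtype)).relIndex
        ρ.range =
        (MulAction.stabilizer ↥(G ⊓ ptStab {x} ⊓ ptStab {y}) z ⊔ ρ.ker).index := by
    rw [← Subgroup.index_comap, Subgroup.comap_map_eq, comap_subtype_ptStab_singleton]
  refine ⟨Subgroup.map_le_range _ _, ?_, ?_⟩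
  · rw [hindex, MulAction.index_stabilizer_sup_normal, horbit]
    simp_rw [orbit_subgroup_eq_setOf_apply]
    congr 1
    ext S
    constructor <;> rintro ⟨w, hw, rfl⟩ <;> exact ⟨w, hw, rfl⟩
  · rw [hindex, ← (show T.IsTree from ⟨hconn, hacyc⟩).ncard_awayNeighborSet hxy, ← horbit,
      ← MulAction.index_stabilizer]
    exact Subgroup.index_dvd_of_le le_sup_left

/-- Let `G` be a type-distance-transitive group of automorphisms of a
thick locally finite tree, let `d(x,y) = k ≥ 1`, let `z` be a neighbour of `y` with
`d(x,z) = k+1`, let `Λ` (resp. `Λ'`) be the image of `G(x,y)` (resp. `G(x,z)`) acting on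
`S_y(x,1)` and let `K` be the kernel of the action of `G(x,y)` on `S_y(x,1)`.  Then
`Λ' ≤ Λ`, the index `|Λ : Λ'|` equals the number of orbits of `K` on `S_x(y,1)`, and this
index divides `deg(y) − 1`. -/
theorem index_of_extended_segment_stabilizer
    {V : Type*} (T : SimpleGraph V) (hconn : T.Connected) (hacyc : T.IsAcyclic)
    (hthick : Thick T) (hlf : ∀ v : V, (T.neighborSet v).Finite)
    (G : Subgroup (Equiv.Perm V)) (hG : PreservesAdj T G)
    (hTDT : ∀ k, TypeDistTrans T G k)
    (x y z : V) (k : ℕ) (hk : 1 ≤ k) (hd : T.dist x y = k)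
    (hyz : T.Adj y z) (hxz : T.dist x z = k + 1)
    (ρ : ↥(G ⊓ ptStab {x} ⊓ ptStab {y}) →*
        Equiv.Perm {w : V // T.Adj x w ∧ T.dist w y = T.dist x y + 1})
    (hρ : ∀ (g : ↥(G ⊓ ptStab {x} ⊓ ptStab {y}))
        (w : {w : V // T.Adj x w ∧ T.dist w y = T.dist x y + 1}),
        ((ρ g) w : V) = (g : Equiv.Perm V) (w : V)) :
    Subgroup.map ρ ((ptStab {z}).comap (G ⊓ ptStab {x} ⊓ ptStab {y}).subtype) ≤ ρ.range ∧
    (Subgroup.map ρ ((ptStab {z}).comap (G ⊓ ptStab {x} ⊓ ptStab {y}).subtype)).relIndex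
        ρ.range =
      {S : Set V | ∃ w : V, (T.Adj y w ∧ T.dist w x = T.dist y x + 1) ∧
        S = {w' : V | ∃ g ∈ MonoidHom.ker ρ, (g : Equiv.Perm V) w = w'}}.ncard ∧
    (Subgroup.map ρ ((ptStab {z}).comap (G ⊓ ptStab {x} ⊓ ptStab {y}).subtype)).relIndex
        ρ.range ∣ ((T.neighborSet y).ncard - 1) :=
  index_of_extended_segment_stabilizer_general T hconn hacyc G hG hTDT x y z k hk hd hyz hxz ρ
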